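/- Local optimality implies global optimality for ordinally concave maximization over a box: let f be ordinally concave on Ξ⁰, b ∈ ℤ_{≥0}^I, and ξ ∈ Ξ⁰ with ξ ≤ b. If for every coordinate i with ξ + χ_i ≤ b and ξ + χ_i ∈ Ξ⁰ we have f(ξ + χ_i) < f(ξ), and ξ was reached by greedily adding best unit increments from 0 (so each earlier increment weakly increased f relative to alternatives), then ξ maximizes f over {ζ ∈ Ξ⁰ : ζ ≤ b}. In particular, the outcome of the domain-reduction algorithm is a maximizer of f over the box. -/

import Mathlib

/-- `chi j` is the unit vector at `j` for `j = some i`, and the zero vector for `j = none`. -/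
def chi {I : Type*} [DecidableEq I] : Option I → I → ℤ
  | none => fun _ => 0
  | some i => fun k => if k = i then 1 else 0

/-- Unit vector at coordinate `i`. -/
def unitv {I : Type*} [DecidableEq I] (i : I) : I → ℤ := fun k => if k = i then 1 else 0

/-- `f` is ordinally concave on the domain `Ξ`. -/
def OrdinallyConcave {I : Type*} [DecidableEq I] (Ξ : Set (I → ℤ)) (f : (I → ℤ) → ℝ) : Prop :=
  ∀ ξ ∈ Ξ, ∀ ξ' ∈ Ξ, ∀ i : I, ξ' i < ξ i →
    ∃ j : Option I, (∀ k, j = some k → ξ k < ξ' k) ∧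
      ξ - chi (some i) + chi j ∈ Ξ ∧ ξ' + chi (some i) - chi j ∈ Ξ ∧
      (f ξ < f (ξ - chi (some i) + chi j) ∨
        f ξ' < f (ξ' + chi (some i) - chi j) ∨
        (f (ξ' + chi (some i) - chi j) = f ξ' ∧ f (ξ - chi (some i) + chi j) = f ξ))

/-- The states reachable by the domain-reduction algorithm for maximizing `f` over the
box `{ζ ∈ Ξ : ζ ≤ b}`: starting from `0`, repeatedly add a best unit increment as long
as this weakly increases `f`. -/
inductive Reach {I : Type*} [DecidableEq I] (Ξ : Set (I → ℤ)) (f : (I → ℤ) → ℝ)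
    (b : I → ℤ) : (I → ℤ) → Prop
  | zero : Reach Ξ f b 0
  | step (ξ : I → ℤ) (i : I) :
      Reach Ξ f b ξ →
      ξ + unitv i ∈ Ξ → ξ + unitv i ≤ b →
      f ξ ≤ f (ξ + unitv i) →
      (∀ i' : I, ξ + unitv i' ∈ Ξ → ξ + unitv i' ≤ b → f (ξ + unitv i') ≤ f (ξ + unitv i)) →
      Reach Ξ f b (ξ + unitv i)

/-!
Every state reached by the greedy algorithm lies below some maximizer `m` of `f` over the box.
This holds at `0`, and when the algorithm adds `χ_i` to `ξ` while `ξ i = m i`, ordinal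
concavity applied to `ξ + χ_i` and `m` at `i` yields a partner `m + χ_i - χ_j` (with `ξ + χ_j`
on the other side) which, since the step was a best weakly improving one and `m` is maximal, is
again a maximizer and lies above `ξ + χ_i`. At termination, if `ξ < m` at some `i`, ordinal
concavity applied to `m` and `ξ` at `i` can only exchange `m - χ_i` with `ξ + χ_i`, and the
local optimality of `ξ` together with the maximality of `m` rules out every alternative.
-/

section UnitVectors

variable {I : Type*} [DecidableEq I]

@[simp]
lemma chi_none : (chi none : I → ℤ) = 0 := rfl

@[simp]
lemma chi_some (i : I) : (chi (some i) : I → ℤ) = unitv i := rfl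

lemma unitv_nonneg (i : I) : 0 ≤ unitv i := fun k => by
  simp only [unitv, Pi.zero_apply]
  split_ifs <;> norm_num

lemma chi_nonneg (j : Option I) : 0 ≤ (chi j : I → ℤ) := by
  cases j with
  | none => exact le_rfl
  | some i => exact unitv_nonneg i

lemma le_add_unitv (ξ : I → ℤ) (i : I) : ξ ≤ ξ + unitv i :=
  le_add_of_nonneg_right (unitv_nonneg i)

lemma add_unitv_le_of_lt {ξ m : I → ℤ} {i : I} (hle : ξ ≤ m) (hlt : ξ i < m i) :
    ξ + unitv i ≤ m := fun k => by
  simp only [unitv, Pi.add_apply]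
  split_ifs with hk
  · subst hk; omega
  · simpa using hle k

end UnitVectors

section DomainReduction

variable {I : Type*} [DecidableEq I] {Ξ : Set (I → ℤ)} {f : (I → ℤ) → ℝ} {b : I → ℤ}

lemma Reach.mem (h0 : (0 : I → ℤ) ∈ Ξ) {ξ : I → ℤ} (h : Reach Ξ f b ξ) : ξ ∈ Ξ := by
  induction h with
  | zero => exact h0
  | step _ _ _ hmem => exact hmem

lemma OrdinallyConcave.exists_isMaxOn_ge_add_unitv (hf : OrdinallyConcave Ξ f)
    {ξ m : I → ℤ} {i : I} (hm : m ∈ {ζ ∈ Ξ | ζ ≤ b}) (hmax : IsMaxOn f {ζ ∈ Ξ | ζ ≤ b} m)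
    (hξm : ξ ≤ m) (hmi : m i = ξ i) (hmem : ξ + unitv i ∈ Ξ) (hle : ξ + unitv i ≤ b)
    (hmono : f ξ ≤ f (ξ + unitv i))
    (hbest : ∀ k, ξ + unitv k ∈ Ξ → ξ + unitv k ≤ b → f (ξ + unitv k) ≤ f (ξ + unitv i)) :
    ∃ m' ∈ {ζ ∈ Ξ | ζ ≤ b}, IsMaxOn f {ζ ∈ Ξ | ζ ≤ b} m' ∧ ξ + unitv i ≤ m' := by
  have hlt : m i < (ξ + unitv i) i := by simp [unitv, hmi]
  obtain ⟨j, hj, hα, hβ, hor⟩ := hf _ hmem m hm.1 i hlt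
  rw [chi_some, add_sub_cancel_right] at hα hor
  have hξb : ξ i < b i := lt_of_lt_of_le (by simp [unitv]) (hle i)
  have hmb : m + unitv i ≤ b := add_unitv_le_of_lt hm.2 (hmi ▸ hξb)
  have hβb : m + unitv i - chi j ≤ b := (sub_le_self _ (chi_nonneg j)).trans hmb
  obtain ⟨hα_le, hβ_ge⟩ :
      f (ξ + chi j) ≤ f (ξ + unitv i) ∧ ξ + unitv i ≤ m + unitv i - chi j := by
    cases j with
    | none => exact ⟨by simpa using hmono, by simpa using hξm⟩
    | some k =>
      have hk : ξ k < m k := (le_add_unitv ξ i k).trans_lt (hj k rfl)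
      refine ⟨hbest k hα ((add_unitv_le_of_lt hξm hk).trans hm.2), ?_⟩
      rw [chi_some, le_sub_iff_add_le, add_right_comm]
      exact add_le_add_left (add_unitv_le_of_lt hξm hk) _
  rcases hor with h | h | ⟨h, -⟩
  · exact absurd hα_le (not_le.2 h)
  · exact absurd (hmax ⟨hβ, hβb⟩) (not_le.2 h)
  · exact ⟨_, ⟨hβ, hβb⟩, fun ζ hζ => h ▸ hmax hζ, hβ_ge⟩

lemma Reach.exists_isMaxOn_ge (hpos : ∀ ξ ∈ Ξ, ∀ i, 0 ≤ ξ i) (hf : OrdinallyConcave Ξ f)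
    {m₀ : I → ℤ} (hm₀ : m₀ ∈ {ζ ∈ Ξ | ζ ≤ b}) (hmax₀ : IsMaxOn f {ζ ∈ Ξ | ζ ≤ b} m₀)
    {ξ : I → ℤ} (h : Reach Ξ f b ξ) :
    ∃ m ∈ {ζ ∈ Ξ | ζ ≤ b}, IsMaxOn f {ζ ∈ Ξ | ζ ≤ b} m ∧ ξ ≤ m := by
  induction h with
  | zero => exact ⟨m₀, hm₀, hmax₀, hpos m₀ hm₀.1⟩
  | step ξ i _ hmem hle hmono hbest ih =>
    obtain ⟨m, hm, hmax, hξm⟩ := ih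
    by_cases hlt : ξ i < m i
    · exact ⟨m, hm, hmax, add_unitv_le_of_lt hξm hlt⟩
    · exact hf.exists_isMaxOn_ge_add_unitv hm hmax hξm (le_antisymm (not_lt.1 hlt) (hξm i))
        hmem hle hmono hbest

lemma OrdinallyConcave.isMaxOn_of_le_isMaxOn (hf : OrdinallyConcave Ξ f) {ξ m : I → ℤ}
    (hm : m ∈ {ζ ∈ Ξ | ζ ≤ b}) (hmax : IsMaxOn f {ζ ∈ Ξ | ζ ≤ b} m) (hξ : ξ ∈ Ξ) (hξm : ξ ≤ m)
    (hterm : ∀ i, ξ + unitv i ∈ Ξ → ξ + unitv i ≤ b → f (ξ + unitv i) < f ξ) :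
    IsMaxOn f {ζ ∈ Ξ | ζ ≤ b} ξ := by
  rcases hξm.eq_or_lt with rfl | hlt
  · exact hmax
  obtain ⟨i, hi⟩ := (Pi.lt_def.1 hlt).2
  obtain ⟨j, hj, hα, hβ, hor⟩ := hf m hm.1 ξ hξ i hi
  obtain rfl : j = none := by
    cases j with
    | none => rfl
    | some k => exact absurd (hj k rfl) (not_lt.2 (hξm k))
  simp only [chi_none, chi_some, add_zero, sub_zero] at hα hβ hor
  have hαb : m - unitv i ≤ b := (sub_le_self _ (unitv_nonneg i)).trans hm.2
  have hterm_i := hterm i hβ ((add_unitv_le_of_lt hξm hi).trans hm.2)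
  rcases hor with h | h | ⟨h, -⟩
  · exact absurd (hmax ⟨hα, hαb⟩) (not_le.2 h)
  · exact absurd hterm_i (not_lt.2 h.le)
  · exact absurd hterm_i (h ▸ lt_irrefl _)

end DomainReduction

theorem domain_reduction_global_max_general {I : Type*} [DecidableEq I]
    (Ξ : Set (I → ℤ)) (hfin : Ξ.Finite) (h0 : (0 : I → ℤ) ∈ Ξ)
    (hpos : ∀ ξ ∈ Ξ, ∀ i, 0 ≤ ξ i)
    (f : (I → ℤ) → ℝ) (hf : OrdinallyConcave Ξ f)
    (b : I → ℤ)
    (ξ : I → ℤ) (hreach : Reach Ξ f b ξ)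
    (hterm : ∀ i : I, ξ + unitv i ∈ Ξ → ξ + unitv i ≤ b → f (ξ + unitv i) < f ξ) :
    ∀ ζ ∈ Ξ, ζ ≤ b → f ζ ≤ f ξ := by
  intro ζ hζ hζb
  obtain ⟨m₀, hm₀, hmax₀⟩ :=
    Set.exists_max_image {ζ ∈ Ξ | ζ ≤ b} f (hfin.subset fun _ h => h.1) ⟨ζ, hζ, hζb⟩
  obtain ⟨m, hm, hmax, hξm⟩ := hreach.exists_isMaxOn_ge hpos hf hm₀ hmax₀
  exact hf.isMaxOn_of_le_isMaxOn hm hmax (hreach.mem h0) hξm hterm ⟨hζ, hζb⟩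

/-- if `ξ` is reached by the domain-reduction algorithm and no further
unit increment weakly increases `f`, then `ξ` maximizes `f` over the box
`{ζ ∈ Ξ : ζ ≤ b}`; in particular, the outcome of the domain-reduction algorithm is a
maximizer of `f` over the box. -/
theorem domain_reduction_global_max {I : Type*} [Fintype I] [DecidableEq I]
    (Ξ : Set (I → ℤ)) (hfin : Ξ.Finite) (h0 : (0 : I → ℤ) ∈ Ξ)
    (hpos : ∀ ξ ∈ Ξ, ∀ i, 0 ≤ ξ i)
    (f : (I → ℤ) → ℝ) (hfnn : ∀ ξ ∈ Ξ, 0 ≤ f ξ) (hf : OrdinallyConcave Ξ f)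
    (b : I → ℤ) (hb : ∀ i, 0 ≤ b i)
    (ξ : I → ℤ) (hreach : Reach Ξ f b ξ)
    (hterm : ∀ i : I, ξ + unitv i ∈ Ξ → ξ + unitv i ≤ b → f (ξ + unitv i) < f ξ) :
    ∀ ζ ∈ Ξ, ζ ≤ b → f ζ ≤ f ξ :=
  domain_reduction_global_max_general Ξ hfin h0 hpos f hf b ξ hreach hterm
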